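/- Suppose α ≤ 1 ≤ γ with α < γ (d = 1). Let x, y ∈ ℝ^n satisfy x_1 ≤ … ≤ x_n, y_1 ≤ … ≤ y_n, Σ x_i = Σ y_i = 0 (with pairwise distinct entries if α ≤ 0). Then E_n((x+y)/2) ≤ (E_n(x) + E_n(y))/2, with equality only if x = y. -/

import Mathlib

open Finset

/-- `r^η/η` with the convention `r^0/0 = log r`. -/
noncomputable def pw (η r : ℝ) : ℝ := if η = 0 then Real.log r else r ^ η / η

noncomputable def En1 (n : ℕ) (α γ : ℝ) (x : Fin n → ℝ) : ℝ :=
  ∑ i, ∑ j, if i = j then 0 else pw γ |x i - x j| - pw α |x i - x j|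

/-! For monotone `x` and `y` every gap of `z = (x + y) / 2` is the average
of the corresponding gaps, `|z i - z j| = (|x i - x j| + |y i - y j|) / 2`, so the inequality holds
pair by pair by convexity of `w`. Equality in every pair forces equal gaps by strict convexity,
hence `x - y` constant, hence zero since both configurations are centred. -/

section Potential

theorem hasDerivAt_pw (η : ℝ) {r : ℝ} (hr : 0 < r) : HasDerivAt (pw η) (r ^ (η - 1)) r := by
  unfold pw
  rcases eq_or_ne η 0 with rfl | hη
  · simpa [Real.rpow_neg_one] using Real.hasDerivAt_log hr.ne'
  · simp only [if_neg hη]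
    exact ((Real.hasDerivAt_rpow_const (Or.inl hr.ne')).div_const η).congr_deriv
      (mul_div_cancel_left₀ _ hη)

theorem continuous_pw {η : ℝ} (hη : 0 < η) : Continuous (pw η) := by
  unfold pw
  simp only [if_neg hη.ne']
  exact (Real.continuous_rpow_const hη.le).div_const η

variable {α γ : ℝ}

theorem iterate_deriv_two_pw_sub_pw {r : ℝ} (hr : 0 < r) :
    deriv^[2] (fun s => pw γ s - pw α s) r
      = (γ - 1) * r ^ (γ - 1 - 1) + (1 - α) * r ^ (α - 1 - 1) := by
  have hderiv : deriv (fun s => pw γ s - pw α s) =ᶠ[nhds r] fun s => s ^ (γ - 1) - s ^ (α - 1) :=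
    Filter.eventuallyEq_of_mem (isOpen_Ioi.mem_nhds hr) fun s hs =>
      ((hasDerivAt_pw γ hs).sub (hasDerivAt_pw α hs)).deriv
  have h2 : HasDerivAt (fun s => s ^ (γ - 1) - s ^ (α - 1))
      ((γ - 1) * r ^ (γ - 1 - 1) - (α - 1) * r ^ (α - 1 - 1)) r :=
    (Real.hasDerivAt_rpow_const (Or.inl hr.ne')).sub (Real.hasDerivAt_rpow_const (Or.inl hr.ne'))
  rw [Function.iterate_succ_apply, Function.iterate_one, hderiv.deriv_eq, h2.deriv]
  ring

theorem iterate_deriv_two_pw_sub_pw_pos (hα : α ≤ 1) (hγ : 1 ≤ γ) (h : α < γ) {r : ℝ}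
    (hr : 0 < r) : 0 < deriv^[2] (fun s => pw γ s - pw α s) r := by
  rw [iterate_deriv_two_pw_sub_pw hr]
  have hγr := Real.rpow_pos_of_pos hr (γ - 1 - 1)
  have hαr := Real.rpow_pos_of_pos hr (α - 1 - 1)
  rcases hα.lt_or_eq with hα1 | rfl
  · exact add_pos_of_nonneg_of_pos (by positivity) (mul_pos (by linarith) hαr)
  · exact add_pos_of_pos_of_nonneg (mul_pos (by linarith) hγr) (by simp)

theorem strictConvexOn_pw_sub_pw_Ioi (hα : α ≤ 1) (hγ : 1 ≤ γ) (h : α < γ) :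
    StrictConvexOn ℝ (Set.Ioi 0) (fun r => pw γ r - pw α r) :=
  strictConvexOn_of_deriv2_pos (convex_Ioi 0)
    (fun _ hr => ((hasDerivAt_pw γ hr).sub (hasDerivAt_pw α hr)).continuousAt.continuousWithinAt)
    (fun _ hr => iterate_deriv_two_pw_sub_pw_pos hα hγ h (interior_subset hr))

theorem strictConvexOn_pw_sub_pw_Ici (hα0 : 0 < α) (hα : α ≤ 1) (hγ : 1 ≤ γ) (h : α < γ) :
    StrictConvexOn ℝ (Set.Ici 0) (fun r => pw γ r - pw α r) :=
  strictConvexOn_of_deriv2_pos (convex_Ici 0)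
    ((continuous_pw (by linarith)).sub (continuous_pw hα0)).continuousOn
    (fun _ hr => iterate_deriv_two_pw_sub_pw_pos hα hγ h (by rwa [interior_Ici] at hr))

end Potential

theorem ConvexOn.map_add_div_two_le {S : Set ℝ} {f : ℝ → ℝ} (hf : ConvexOn ℝ S f) {a b : ℝ}
    (ha : a ∈ S) (hb : b ∈ S) : f ((a + b) / 2) ≤ (f a + f b) / 2 := by
  calc f ((a + b) / 2) = f ((1 / 2 : ℝ) • a + (1 / 2 : ℝ) • b) := by
        simp only [smul_eq_mul]; ring_nf
    _ ≤ (1 / 2 : ℝ) • f a + (1 / 2 : ℝ) • f b := hf.2 ha hb (by norm_num) (by norm_num) (by norm_num)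
    _ = (f a + f b) / 2 := by simp only [smul_eq_mul]; ring

theorem StrictConvexOn.map_add_div_two_lt {S : Set ℝ} {f : ℝ → ℝ} (hf : StrictConvexOn ℝ S f)
    {a b : ℝ} (ha : a ∈ S) (hb : b ∈ S) (hab : a ≠ b) : f ((a + b) / 2) < (f a + f b) / 2 := by
  calc f ((a + b) / 2) = f ((1 / 2 : ℝ) • a + (1 / 2 : ℝ) • b) := by
        simp only [smul_eq_mul]; ring_nf
    _ < (1 / 2 : ℝ) • f a + (1 / 2 : ℝ) • f b :=
        hf.2 ha hb hab (by norm_num) (by norm_num) (by norm_num)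
    _ = (f a + f b) / 2 := by simp only [smul_eq_mul]; ring

section Configurations

variable {ι : Type*} [LinearOrder ι] {x y : ι → ℝ}

theorem abs_sub_midpoint_of_monotone (hxm : Monotone x) (hym : Monotone y) (i j : ι) :
    |((x + y) / 2) i - ((x + y) / 2) j| = (|x i - x j| + |y i - y j|) / 2 := by
  simp only [Pi.div_apply, Pi.add_apply, Pi.ofNat_apply]
  rcases le_total i j with hij | hij
  · have := hxm hij; have := hym hij
    rw [abs_of_nonpos (by linarith), abs_of_nonpos (by linarith), abs_of_nonpos (by linarith)]
    ring
  · have := hxm hij; have := hym hij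
    rw [abs_of_nonneg (by linarith), abs_of_nonneg (by linarith), abs_of_nonneg (by linarith)]
    ring

variable [Fintype ι]

/-- Two monotone configurations with the same gaps differ by a translation, which is
zero when their sums agree. -/
theorem eq_of_monotone_of_abs_sub_eq (hxm : Monotone x) (hym : Monotone y)
    (hsum : ∑ i, x i = ∑ i, y i) (hgap : ∀ i j, i ≠ j → |x i - x j| = |y i - y j|) : x = y := by
  have hshift : ∀ i j, x i - y i = x j - y j := by
    intro i j
    rcases eq_or_ne i j with rfl | hij
    · rfl
    have := hgap i j hij
    rcases le_total i j with hle | hle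
    · rw [abs_of_nonpos (sub_nonpos.2 (hxm hle)), abs_of_nonpos (sub_nonpos.2 (hym hle))] at this
      linarith
    · rw [abs_of_nonneg (sub_nonneg.2 (hxm hle)), abs_of_nonneg (sub_nonneg.2 (hym hle))] at this
      linarith
  funext i
  have hcard : (Fintype.card ι : ℝ) ≠ 0 := Nat.cast_ne_zero.2 (Fintype.card_pos_iff.2 ⟨i⟩).ne'
  have hzero : (Fintype.card ι : ℝ) * (x i - y i) = 0 := by
    rw [← nsmul_eq_mul, ← card_univ, ← sum_const, sum_congr rfl fun j _ => hshift i j,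
      sum_sub_distrib, hsum, sub_self]
  linarith [(mul_eq_zero.1 hzero).resolve_left hcard]

noncomputable def pairEnergy (f : ℝ → ℝ) (x : ι → ℝ) : ℝ :=
  ∑ i, ∑ j, if i = j then 0 else f |x i - x j|

theorem pairEnergy_midpoint_lt {S : Set ℝ} {f : ℝ → ℝ} (hf : StrictConvexOn ℝ S f)
    (hxS : ∀ i j, i ≠ j → |x i - x j| ∈ S) (hyS : ∀ i j, i ≠ j → |y i - y j| ∈ S)
    (hxm : Monotone x) (hym : Monotone y) (hsum : ∑ i, x i = ∑ i, y i) (hxy : x ≠ y) :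
    pairEnergy f ((x + y) / 2) < (pairEnergy f x + pairEnergy f y) / 2 := by
  obtain ⟨i, j, hij, hgap⟩ : ∃ i j, i ≠ j ∧ |x i - x j| ≠ |y i - y j| := by
    by_contra! hgap
    exact hxy (eq_of_monotone_of_abs_sub_eq hxm hym hsum hgap)
  simp only [pairEnergy, ← Fintype.sum_prod_type']
  rw [← sum_add_distrib, sum_div]
  refine sum_lt_sum (fun p _ => ?_) ⟨(i, j), mem_univ _, ?_⟩
  · by_cases hp : p.1 = p.2
    · simp [hp]
    · simp only [if_neg hp, abs_sub_midpoint_of_monotone hxm hym]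
      exact hf.convexOn.map_add_div_two_le (hxS _ _ hp) (hyS _ _ hp)
  · simp only [if_neg hij, abs_sub_midpoint_of_monotone hxm hym]
    exact hf.map_add_div_two_lt (hxS _ _ hij) (hyS _ _ hij) hgap

end Configurations

theorem stmt_16_general (n : ℕ) (α γ : ℝ) (hα : α ≤ 1) (hγ : 1 ≤ γ) (h : α < γ)
    (x y : Fin n → ℝ) (hxm : Monotone x) (hym : Monotone y)
    (hxs : ∑ i, x i = 0) (hys : ∑ i, y i = 0)
    (hxd : α ≤ 0 → Function.Injective x) (hyd : α ≤ 0 → Function.Injective y) :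
    En1 n α γ ((x + y) / 2) ≤ (En1 n α γ x + En1 n α γ y) / 2 ∧
    (En1 n α γ ((x + y) / 2) = (En1 n α γ x + En1 n α γ y) / 2 → x = y) := by
  by_cases hxy : x = y
  · subst hxy
    rw [show (x + x) / 2 = x by ext; simp only [Pi.div_apply, Pi.add_apply, Pi.ofNat_apply]; ring]
    simp
  have hsum : ∑ i, x i = ∑ i, y i := hxs.trans hys.symm
  have key : En1 n α γ ((x + y) / 2) < (En1 n α γ x + En1 n α γ y) / 2 := by
    by_cases hα0 : α ≤ 0
    · have hgap {z : Fin n → ℝ} (hz : Function.Injective z) (i j : Fin n) (hij : i ≠ j) :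
          |z i - z j| ∈ Set.Ioi 0 :=
        abs_pos.2 (sub_ne_zero.2 (hz.ne hij))
      exact pairEnergy_midpoint_lt (strictConvexOn_pw_sub_pw_Ioi hα hγ h)
        (hgap (hxd hα0)) (hgap (hyd hα0)) hxm hym hsum hxy
    · exact pairEnergy_midpoint_lt (strictConvexOn_pw_sub_pw_Ici (not_le.1 hα0) hα hγ h)
        (fun _ _ _ => Set.mem_Ici.2 (abs_nonneg _)) (fun _ _ _ => Set.mem_Ici.2 (abs_nonneg _)) hxm hym hsum hxy
  exact ⟨key.le, fun heq => absurd heq key.ne⟩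

theorem stmt_16 (n : ℕ) (hn : 2 ≤ n) (α γ : ℝ) (hα : α ≤ 1) (hγ : 1 ≤ γ) (h : α < γ)
    (x y : Fin n → ℝ) (hxm : Monotone x) (hym : Monotone y)
    (hxs : ∑ i, x i = 0) (hys : ∑ i, y i = 0)
    (hxd : α ≤ 0 → Function.Injective x) (hyd : α ≤ 0 → Function.Injective y) :
    En1 n α γ ((x + y) / 2) ≤ (En1 n α γ x + En1 n α γ y) / 2 ∧
    (En1 n α γ ((x + y) / 2) = (En1 n α γ x + En1 n α γ y) / 2 → x = y) :=
  stmt_16_general n α γ hα hγ h x y hxm hym hxs hys hxd hyd
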